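/- arXiv:cmp-lg/9801001 — 5 statements merged into one kernel-verified Lean document; each statement's English description precedes it below -/
import Mathlib

section
/- Let A = {0,1}. The class of string-probability functions realizable by basic Markov models (of any order) is strictly contained in the class realizable by hierarchical non-emitting Markov models. Precisely: (i) for every n and every basic Markov model of order n over A there is a hierarchical non-emitting Markov model of order n over A assigning exactly the same probability to every string x^T ∈ A^T for every T; and (ii) there exists a hierarchical non-emitting Markov model φ of order 2 over A such that for every n and every basic Markov model φ' of order n over A, there is some T and some string x^T ∈ A^T with p_ε(x^T | φ) ≠ p_m(x^T | φ'). -/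
open Finset

/-- The suffix of `l` of length `min k l.length`. -/
def suff {A : Type*} (k : ℕ) (l : List A) : List A := l.drop (l.length - k)
/-- Basic Markov model of order `n`: probability of emitting the string `w`
after the history `h`, where each symbol is predicted from the context that is
the suffix of the full history of length `min n (history length)`. -/
noncomputable def pm {A : Type*} (n : ℕ) (d : List A → A → ℝ) :
    List A → List A → ℝ
  | _, [] => 1
  | h, y :: w => d (suff n h) y * pm n d (h ++ [y]) w
/-- Hierarchical non-emitting Markov model of order `n` with emitting
transition probabilities `d` and non-emitting parameters `lam` (with
`lam [] = 1`): probability of emitting the string `w` from state `x`.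
From a nonempty state `x`, with probability `lam x` it emits `y` via `d x y`
and moves to the suffix of `x ++ [y]` of length `min (|x|+1) n`; with
probability `1 - lam x` it moves to the suffix `x.tail` without emitting. -/
noncomputable def pe {A : Type*} (n : ℕ) (d : List A → A → ℝ) (lam : List A → ℝ) :
    List A → List A → ℝ
  | _, [] => 1
  | [], y :: w => lam [] * d [] y * pe n d lam (suff n [y]) w
  | a :: x, y :: w =>
      lam (a :: x) * d (a :: x) y * pe n d lam (suff n ((a :: x) ++ [y])) w
      + (1 - lam (a :: x)) * pe n d lam x (y :: w)
termination_by x w => (w.length, x.length)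
/-- Validity of an order-`n` basic Markov model: a conditional probability
distribution on `A` for every context of length at most `n`. -/
def IsBasic {A : Type*} [Fintype A] (n : ℕ) (d : List A → A → ℝ) : Prop :=
  ∀ c : List A, c.length ≤ n →
    (∀ y : A, 0 ≤ d c y) ∧ (∑ y : A, d c y = 1)
/-- Validity of an order-`n` hierarchical non-emitting Markov model: emitting
distributions for every state of length at most `n`, non-emitting parameters
in `[0,1]`, and `λ₀(ε) = 1`. -/
def IsNonEmit {A : Type*} [Fintype A] (n : ℕ) (d : List A → A → ℝ)
    (lam : List A → ℝ) : Prop :=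
  (∀ c : List A, c.length ≤ n →
    (∀ y : A, 0 ≤ d c y) ∧ (∑ y : A, d c y = 1)) ∧
  (∀ c : List A, c.length ≤ n → 0 ≤ lam c ∧ lam c ≤ 1) ∧
  lam [] = 1

/-! ### Auxiliary lemmas -/

lemma suff_nil {A : Type*} (n : ℕ) : suff n ([] : List A) = [] := by simp [suff]

lemma suff_suff_append {A : Type*} (n : ℕ) (h : List A) (y : A) :
    suff n (suff n h ++ [y]) = suff n (h ++ [y]) := by
  simp only [suff]
  have h1 : h.drop (h.length - n) ++ [y] = (h ++ [y]).drop (h.length - n) :=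
    (List.drop_append_of_le_length (by omega)).symm
  rw [h1, List.drop_drop]
  congr 1
  simp only [List.length_drop, List.length_append, List.length_singleton]
  omega

/-- A non-emitting model with all `lam = 1` computes exactly the basic Markov
probabilities. -/
lemma pe_one_eq_pm {A : Type*} (n : ℕ) (d : List A → A → ℝ) :
    ∀ (w h : List A), pe n d (fun _ => 1) (suff n h) w = pm n d h w := by
  intro w
  induction w with
  | nil => intro h; simp [pe, pm]
  | cons y w ih =>
    intro h
    rw [pm]
    rcases hs : suff n h with _ | ⟨a, x⟩
    · rw [pe]
      have h2 : suff n [y] = suff n (h ++ [y]) := by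
        rw [← suff_suff_append n h y, hs]; rfl
      rw [h2, ih (h ++ [y])]
      ring
    · rw [pe]
      have h2 : suff n ((a :: x) ++ [y]) = suff n (h ++ [y]) := by
        rw [← suff_suff_append n h y, hs]
      rw [h2, ih (h ++ [y])]
      ring

/-- The counterexample's emission distributions. -/
noncomputable def D2 : List (Fin 2) → Fin 2 → ℝ := fun c y =>
  if c = [] then 1/2 else if y = 0 then 1 else 0
/-- The counterexample's non-emitting parameters. -/
noncomputable def L2 : List (Fin 2) → ℝ := fun c => if c = [0] then 1/2 else 1
/-- The probability of emitting `t` zeros from state `[0]`. -/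
noncomputable def Fz (t : ℕ) : ℝ := 2/3 + (1/3) * (1/4)^t

lemma peB : ∀ t, pe 2 D2 L2 [0, 0] (List.replicate t 0) = 1 := by
  intro t
  induction t with
  | zero => simp [pe]
  | succ t ih =>
    rw [List.replicate_succ, pe]
    have hs : suff 2 ([0, 0] ++ [(0 : Fin 2)]) = [0, 0] := by simp [suff]
    rw [hs, ih]
    norm_num [D2, L2]
    simp

lemma peA : ∀ t, pe 2 D2 L2 [0] (List.replicate t 0) = Fz t := by
  intro t
  induction t with
  | zero => norm_num [pe, Fz]
  | succ t ih =>
    rw [List.replicate_succ, pe]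
    have hs : suff 2 ([0] ++ [(0 : Fin 2)]) = [0, 0] := by simp [suff]
    rw [hs, peB t, pe]
    have hs2 : suff 2 [(0 : Fin 2)] = [0] := by simp [suff]
    rw [hs2, ih]
    norm_num [D2, L2, Fz, pow_succ]
    ring

lemma pe_nil_rep (T : ℕ) :
    pe 2 D2 L2 [] (List.replicate (T + 1) 0) = (1/2) * Fz T := by
  rw [List.replicate_succ, pe]
  have hs : suff 2 [(0 : Fin 2)] = [0] := by simp [suff]
  rw [hs, peA T]
  norm_num [D2, L2]

lemma pm_append {A : Type*} (n : ℕ) (d : List A → A → ℝ) :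
    ∀ (w h : List A) (y : A),
      pm n d h (w ++ [y]) = pm n d h w * d (suff n (h ++ w)) y := by
  intro w
  induction w with
  | nil => intro h y; simp [pm]
  | cons z w ih =>
    intro h y
    rw [List.cons_append, pm, pm, ih (h ++ [z]) y]
    simp only [List.append_assoc, List.singleton_append]
    ring

lemma suff_replicate (n T : ℕ) (hT : n ≤ T) :
    suff n (List.replicate T (0 : Fin 2)) = List.replicate n 0 := by
  unfold suff
  rw [List.length_replicate, List.drop_replicate]
  congr 1
  omega

lemma counterexample_core (n : ℕ) (d' : List (Fin 2) → Fin 2 → ℝ)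
    (hcon : ∀ x : List (Fin 2), pe 2 D2 L2 [] x = pm n d' [] x) : False := by
  set c := d' (List.replicate n 0) 0 with hc
  have step : ∀ T, n ≤ T →
      pm n d' [] (List.replicate (T + 1) (0 : Fin 2))
        = pm n d' [] (List.replicate T 0) * c := by
    intro T hT
    rw [List.replicate_succ', pm_append, List.nil_append, suff_replicate n T hT]
  have h1 := hcon (List.replicate (n + 1) 0)
  have h2 := hcon (List.replicate (n + 2) 0)
  have h3 := hcon (List.replicate (n + 3) 0)
  rw [pe_nil_rep] at h1 h2 h3
  have s1 := step (n + 1) (by omega)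
  have s2 := step (n + 2) (by omega)
  rw [show n + 1 + 1 = n + 2 by ring] at s1
  rw [show n + 2 + 1 = n + 3 by ring] at s2
  rw [← h1, ← h2] at s1
  rw [← h2, ← h3] at s2
  have e1 : Fz (n + 1) = Fz n * c := by linarith
  have e2 : Fz (n + 2) = Fz (n + 1) * c := by linarith
  have key : Fz (n + 1) * Fz (n + 1) = Fz n * Fz (n + 2) := by
    rw [e2, e1]; ring
  have hx : (0:ℝ) < (1/4)^n := by positivity
  simp only [Fz, pow_succ] at key
  nlinarith [hx]

/-- Over the binary alphabet, the class of string-probability functions of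
basic Markov models (of any order) is strictly contained in the class of
hierarchical non-emitting Markov models: (i) every order-`n` basic model is
matched exactly by an order-`n` non-emitting model, and (ii) some order-2
non-emitting model differs from every basic Markov model on some string. -/
theorem nonemitting_strictly_more_powerful_than_markov :
    (∀ (n : ℕ) (d : List (Fin 2) → Fin 2 → ℝ), IsBasic n d →
      ∃ (d' : List (Fin 2) → Fin 2 → ℝ) (lam : List (Fin 2) → ℝ),
        IsNonEmit n d' lam ∧
        ∀ x : List (Fin 2), pe n d' lam [] x = pm n d [] x) ∧
    (∃ (d : List (Fin 2) → Fin 2 → ℝ) (lam : List (Fin 2) → ℝ),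
      IsNonEmit 2 d lam ∧
      ∀ (n : ℕ) (d' : List (Fin 2) → Fin 2 → ℝ), IsBasic n d' →
        ∃ x : List (Fin 2), pe 2 d lam [] x ≠ pm n d' [] x) := by
  constructor
  · intro n d hB
    refine ⟨d, fun _ => 1, ⟨hB, fun c _ => ⟨zero_le_one, le_refl 1⟩, rfl⟩, ?_⟩
    intro x
    have := pe_one_eq_pm n d x []
    rwa [suff_nil] at this
  · refine ⟨D2, L2, ⟨?_, ?_, ?_⟩, ?_⟩
    · intro c _
      constructor
      · intro y
        unfold D2
        split_ifs <;> norm_num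
      · rw [Fin.sum_univ_two]
        by_cases h : c = [] <;> simp [D2, h]
        norm_num
    · intro c _
      unfold L2
      split_ifs <;> norm_num
    · simp [L2]
    · intro n d' _
      by_contra hcon
      push_neg at hcon
      exact counterexample_core n d' hcon
end

section
/- There exists a hierarchical non-emitting Markov model φ of order 2 over the binary alphabet A = {0,1} such that for every n, every basic Markov model φ' of order n over A, there exists a length T and a string x^T ∈ A^T with p_ε(x^T | φ) ≠ p_m(x^T | φ'). (Lemma 1: ∃φ ∀φ' ∃x^T [p_ε(x^T|φ) ≠ p_m(x^T|φ')].) -/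
open Finset

/-! On a run `1 1 1 …` an order-`n` Markov model multiplies by the same factor
`δ(1 | 1ⁿ)` at every step once the run is longer than `n`, so the probabilities
of the runs `1ᵏ` form an eventually geometric sequence: `u (k+2) * u k = u (k+1) ^ 2`.
For the non-emitting model below, the probabilities of runs are governed by the
transfer matrix `!![1/4, 1/4; 1/8, 5/8]` between the states `1` and `11`, so they
satisfy `u (m+2) = 7/8 u (m+1) - 1/8 u m`. Along such a recurrence the defect
`u (m+2) * u m - u (m+1) ^ 2` gets multiplied by the determinant `1/8` at each
step, and it starts at `1/16`, so it never vanishes. -/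

section Markov

variable {A : Type*} (n : ℕ) (d : List A → A → ℝ)

lemma pm_append_singleton (w h : List A) (y : A) :
    pm n d h (w ++ [y]) = pm n d h w * d (suff n (h ++ w)) y := by
  induction w generalizing h with
  | nil => simp [pm]
  | cons z w ih =>
    rw [List.cons_append, pm, pm, ih, List.append_assoc, List.singleton_append, mul_assoc]

lemma suff_replicate_s1 {k : ℕ} (hk : n ≤ k) (a : A) :
    suff n (List.replicate k a) = List.replicate n a := by
  rw [suff, List.length_replicate, List.drop_replicate]
  congr 1
  omega

lemma pm_replicate_succ {k : ℕ} (hk : n ≤ k) (a : A) :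
    pm n d [] (List.replicate (k + 1) a)
      = pm n d [] (List.replicate k a) * d (List.replicate n a) a := by
  rw [List.replicate_succ', pm_append_singleton, List.nil_append, suff_replicate_s1 n hk]

lemma pm_replicate_mul_eq_sq {k : ℕ} (hk : n ≤ k) (a : A) :
    pm n d [] (List.replicate (k + 2) a) * pm n d [] (List.replicate k a)
      = pm n d [] (List.replicate (k + 1) a) ^ 2 := by
  rw [pm_replicate_succ n d (by omega : n ≤ k + 1), pm_replicate_succ n d hk]
  ring

end Markov

lemma mul_sub_sq_of_recurrence {R : Type*} [CommRing R] {u : ℕ → R} {p q : R}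
    (hu : ∀ m, u (m + 2) = p * u (m + 1) - q * u m) (m : ℕ) :
    u (m + 2) * u m - u (m + 1) ^ 2 = q ^ m * (u 2 * u 0 - u 1 ^ 2) := by
  induction m with
  | zero => ring
  | succ m ih =>
    linear_combination u (m + 1) * hu (m + 1) - u (m + 2) * hu m + q * ih

noncomputable def counterDelta (c : List (Fin 2)) (y : Fin 2) : ℝ :=
  if c.length ≤ 1 then 1 / 2 else if y = 1 then 1 else 0

noncomputable def counterLambda (c : List (Fin 2)) : ℝ :=
  if c = [] then 1 else 1 / 2

lemma isNonEmit_counter : IsNonEmit 2 counterDelta counterLambda := by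
  refine ⟨fun c _ => ⟨fun y => ?_, ?_⟩, fun c _ => ?_, rfl⟩
  · unfold counterDelta
    split_ifs <;> norm_num
  · rw [Fin.sum_univ_two]
    by_cases h : c.length ≤ 1 <;> norm_num [counterDelta, h]
  · unfold counterLambda
    split_ifs <;> norm_num

section Counter

local notation "P" => pe 2 counterDelta counterLambda

lemma pe_counter_nil_replicate (m : ℕ) :
    P [] (List.replicate (m + 1) 1) = P [1] (List.replicate m 1) / 2 := by
  rw [List.replicate_succ, pe]
  norm_num [counterLambda, counterDelta, suff, List.cons_ne_nil]
  ring

lemma pe_counter_one_replicate (m : ℕ) :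
    P [1] (List.replicate (m + 1) 1)
      = (P [1] (List.replicate m 1) + P [1, 1] (List.replicate m 1)) / 4 := by
  rw [List.replicate_succ, pe, ← List.replicate_succ, pe_counter_nil_replicate]
  norm_num [counterLambda, counterDelta, suff, List.cons_ne_nil]
  ring

lemma pe_counter_one_one_replicate (m : ℕ) :
    P [1, 1] (List.replicate (m + 1) 1)
      = P [1] (List.replicate m 1) / 8 + 5 * P [1, 1] (List.replicate m 1) / 8 := by
  rw [List.replicate_succ, pe, ← List.replicate_succ, pe_counter_one_replicate]
  norm_num [counterLambda, counterDelta, suff, List.cons_ne_nil]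
  ring

lemma pe_counter_one_replicate_recurrence (m : ℕ) :
    P [1] (List.replicate (m + 2) 1)
      = 7 / 8 * P [1] (List.replicate (m + 1) 1) - 1 / 8 * P [1] (List.replicate m 1) := by
  have h₁ := pe_counter_one_replicate (m + 1)
  have h₂ := pe_counter_one_replicate m
  have h₃ := pe_counter_one_one_replicate m
  linarith

lemma pe_counter_one_replicate_defect_zero :
    P [1] (List.replicate 2 1) * P [1] (List.replicate 0 1) - P [1] (List.replicate 1 1) ^ 2
      = 1 / 16 := by
  rw [pe_counter_one_replicate 1, pe_counter_one_replicate 0, pe_counter_one_one_replicate 0]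
  norm_num [pe]

lemma pe_counter_replicate_mul_ne_sq (m : ℕ) :
    P [] (List.replicate (m + 3) 1) * P [] (List.replicate (m + 1) 1)
      ≠ P [] (List.replicate (m + 2) 1) ^ 2 := by
  have hdefect := mul_sub_sq_of_recurrence (u := fun m => P [1] (List.replicate m 1))
    pe_counter_one_replicate_recurrence m
  rw [pe_counter_one_replicate_defect_zero] at hdefect
  rw [pe_counter_nil_replicate (m + 2), pe_counter_nil_replicate m,
    pe_counter_nil_replicate (m + 1)]
  have hpos : (0 : ℝ) < (1 / 8) ^ m * (1 / 16) := by positivity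
  intro hsq
  linarith

end Counter

/-- Lemma 1: there exists a hierarchical non-emitting Markov model `φ` of
order 2 over the binary alphabet such that for every `n` and every basic
Markov model `φ'` of order `n`, some string receives different probabilities
under `φ` and `φ'`. -/
theorem exists_nonemitting_not_markov :
    ∃ (d : List (Fin 2) → Fin 2 → ℝ) (lam : List (Fin 2) → ℝ),
      IsNonEmit 2 d lam ∧
      ∀ (n : ℕ) (d' : List (Fin 2) → Fin 2 → ℝ), IsBasic n d' →
        ∃ x : List (Fin 2), pe 2 d lam [] x ≠ pm n d' [] x := by
  refine ⟨counterDelta, counterLambda, isNonEmit_counter, fun n d' _ => ?_⟩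
  by_contra! hagree
  apply pe_counter_replicate_mul_ne_sq n
  rw [hagree, hagree, hagree]
  exact pm_replicate_mul_eq_sq n d' n.le_succ 1
end

section
/- Let A = {0,1} and let φ be the hierarchical non-emitting Markov model of order 2 over A with λ₀(ε) = 1, λ₁(0) = 1, λ₁(1) = 0, λ₂(x²) = 1 for every x² ∈ A², and strictly positive emitting distributions δ₀, δ₁, δ₂ chosen so that δ₀(0) ≠ δ₂(0|11). Then the stochastic process defined by φ satisfies no finite-order Markov property: for every p ≥ 1 there exist strings u, v ∈ A* whose suffixes of length p coincide, yet p_ε(u·0 | φ)/p_ε(u | φ) ≠ p_ε(v·0 | φ)/p_ε(v | φ). -/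
open Finset

section helpers
variable (d : List (Fin 2) → Fin 2 → ℝ) (lam : List (Fin 2) → ℝ)

lemma pe_nil (x : List (Fin 2)) : pe 2 d lam x [] = 1 := by
  cases x <;> simp [pe]

lemma pe_start (hlam0 : lam [] = 1) (y : Fin 2) (w : List (Fin 2)) :
    pe 2 d lam [] (y :: w) = d [] y * pe 2 d lam [y] w := by
  rw [pe, hlam0]; simp [suff]

lemma pe_one1 (hlam0 : lam [] = 1) (hlam11 : lam [1] = 0) (y : Fin 2) (w : List (Fin 2)) :
    pe 2 d lam [1] (y :: w) = d [] y * pe 2 d lam [y] w := by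
  rw [pe, hlam11, pe, hlam0]; simp [suff]

lemma pe_one0 (hlam10 : lam [0] = 1) (y : Fin 2) (w : List (Fin 2)) :
    pe 2 d lam [0] (y :: w) = d [0] y * pe 2 d lam [0, y] w := by
  rw [pe, hlam10]; simp [suff]

lemma pe_two (hlam2 : ∀ c : List (Fin 2), c.length = 2 → lam c = 1)
    (a b y : Fin 2) (w : List (Fin 2)) :
    pe 2 d lam [a, b] (y :: w) = d [a, b] y * pe 2 d lam [b, y] w := by
  rw [pe, hlam2 [a, b] rfl]; simp [suff]

lemma pe_rep1 (hlam0 : lam [] = 1) (hlam11 : lam [1] = 0) (k : ℕ) (w : List (Fin 2)) :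
    pe 2 d lam [1] (List.replicate k 1 ++ w) = d [] 1 ^ k * pe 2 d lam [1] w := by
  induction k with
  | zero => simp
  | succ k ih =>
    rw [List.replicate_succ, List.cons_append, pe_one1 d lam hlam0 hlam11, ih]
    ring

lemma pe_rep11 (hlam2 : ∀ c : List (Fin 2), c.length = 2 → lam c = 1)
    (k : ℕ) (w : List (Fin 2)) :
    pe 2 d lam [1, 1] (List.replicate k 1 ++ w) = d [1, 1] 1 ^ k * pe 2 d lam [1, 1] w := by
  induction k with
  | zero => simp
  | succ k ih =>
    rw [List.replicate_succ, List.cons_append, pe_two d lam hlam2, ih]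
    ring

end helpers

/-- The stochastic process defined by the order-2 non-emitting model over
`{0,1}` with `λ₀(ε) = 1`, `λ₁(0) = 1`, `λ₁(1) = 0`, `λ₂ ≡ 1`, strictly
positive emitting distributions, and `δ₀(0) ≠ δ₂(0|11)` satisfies no
finite-order Markov property: for every `p ≥ 1` there are histories `u, v`
agreeing on their last `p` symbols whose conditional next-symbol
probabilities of `0` differ. -/
theorem nonemitting_not_finite_order_markov
    (d : List (Fin 2) → Fin 2 → ℝ) (lam : List (Fin 2) → ℝ)
    (hd : ∀ c : List (Fin 2), c.length ≤ 2 →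
      (∀ y : Fin 2, 0 < d c y) ∧ (∑ y : Fin 2, d c y = 1))
    (hlam0 : lam [] = 1) (hlam10 : lam [0] = 1) (hlam11 : lam [1] = 0)
    (hlam2 : ∀ c : List (Fin 2), c.length = 2 → lam c = 1)
    (hne : d [] 0 ≠ d [1, 1] 0) :
    ∀ p : ℕ, 1 ≤ p → ∃ u v : List (Fin 2),
      suff p u = suff p v ∧
      pe 2 d lam [] (u ++ [0]) / pe 2 d lam [] u ≠
        pe 2 d lam [] (v ++ [0]) / pe 2 d lam [] v := by
  intro p hp
  obtain ⟨q, rfl⟩ : ∃ q, p = q + 1 := ⟨p - 1, (Nat.succ_pred_eq_of_pos hp).symm⟩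
  refine ⟨List.replicate (q + 1) 1, 0 :: 1 :: List.replicate (q + 1) 1, ?_, ?_⟩
  · simp [suff]
  · have h1pos : (0:ℝ) < d [] 1 := (hd [] (by simp)).1 1
    have h11pos : (0:ℝ) < d [1, 1] 1 := (hd [1, 1] (by simp)).1 1
    have h0pos : (0:ℝ) < d [] 0 := (hd [] (by simp)).1 0
    have h01pos : (0:ℝ) < d [0] 1 := (hd [0] (by simp)).1 1
    have h011pos : (0:ℝ) < d [0, 1] 1 := (hd [0, 1] (by simp)).1 1
    have hu : pe 2 d lam [] (List.replicate (q + 1) 1) = d [] 1 ^ (q + 1) := by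
      rw [List.replicate_succ, pe_start d lam hlam0,
        show List.replicate q (1 : Fin 2) = List.replicate q 1 ++ [] by simp,
        pe_rep1 d lam hlam0 hlam11, pe_nil]
      ring
    have hu0 : pe 2 d lam [] (List.replicate (q + 1) 1 ++ [0]) =
        d [] 1 ^ (q + 1) * d [] 0 := by
      rw [List.replicate_succ, List.cons_append, pe_start d lam hlam0,
        pe_rep1 d lam hlam0 hlam11, pe_one1 d lam hlam0 hlam11, pe_nil]
      ring
    have hv : pe 2 d lam [] (0 :: 1 :: List.replicate (q + 1) 1) =
        d [] 0 * d [0] 1 * d [0, 1] 1 * d [1, 1] 1 ^ q := by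
      rw [List.replicate_succ, pe_start d lam hlam0, pe_one0 d lam hlam10,
        pe_two d lam hlam2,
        show List.replicate q (1 : Fin 2) = List.replicate q 1 ++ [] by simp,
        pe_rep11 d lam hlam2, pe_nil]
      ring
    have hv0 : pe 2 d lam [] ((0 :: 1 :: List.replicate (q + 1) 1) ++ [0]) =
        d [] 0 * d [0] 1 * d [0, 1] 1 * d [1, 1] 1 ^ q * d [1, 1] 0 := by
      rw [List.replicate_succ, List.cons_append, List.cons_append, List.cons_append,
        pe_start d lam hlam0, pe_one0 d lam hlam10, pe_two d lam hlam2,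
        pe_rep11 d lam hlam2, pe_two d lam hlam2, pe_nil]
      ring
    rw [hu, hu0, hv, hv0, mul_div_cancel_left₀ _ (by positivity : d [] 1 ^ (q+1) ≠ 0),
      mul_div_cancel_left₀ _
        (by positivity : d [] 0 * d [0] 1 * d [0, 1] 1 * d [1, 1] 1 ^ q ≠ 0)]
    exact hne
end

section
/- Let φ be a hierarchical non-emitting Markov model of order n over a finite alphabet A whose emitting distributions δ_i(·|x^i) are probability distributions on A for every state, whose parameters λ_i take values in [0,1], and with λ₀(ε) = 1. Then φ is a valid probability model: for every 0 ≤ i ≤ n, every state x^i ∈ A^i, and every length T ≥ 0, ∑_{w ∈ A^T} p_ε(w | x^i, φ) = 1. In particular ∑_{x^T ∈ A^T} p_ε(x^T | φ) = 1 for every T. -/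
open Finset

lemma suff_length_le {A : Type*} (k : ℕ) (l : List A) : (suff k l).length ≤ k := by
  simp [suff]; omega

lemma sum_split {A : Type*} [Fintype A] (T : ℕ) (F : List A → ℝ) :
    ∑ f : Fin (T+1) → A, F (List.ofFn f) = ∑ y : A, ∑ g : Fin T → A, F (y :: List.ofFn g) := by
  calc ∑ f : Fin (T+1) → A, F (List.ofFn f)
      = ∑ p : A × (Fin T → A), F (p.1 :: List.ofFn p.2) :=
        (Fintype.sum_equiv (Fin.consEquiv fun _ => A)
          (fun p => F (p.1 :: List.ofFn p.2)) (fun f => F (List.ofFn f))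
          (fun p => by simp [List.ofFn_succ, Fin.consEquiv])).symm
    _ = ∑ y : A, ∑ g : Fin T → A, F (y :: List.ofFn g) :=
        by rw [Fintype.sum_prod_type]

lemma sum_pe {A : Type*} [Fintype A] (n : ℕ)
    (d : List A → A → ℝ) (lam : List A → ℝ)
    (hd : ∀ c : List A, c.length ≤ n → (∑ y : A, d c y = 1))
    (hlam0 : lam [] = 1) :
    ∀ T : ℕ, ∀ x : List A, x.length ≤ n →
      ∑ f : Fin T → A, pe n d lam x (List.ofFn f) = 1 := by
  intro T
  induction T with
  | zero => intro x hx; simp [pe]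
  | succ T ih =>
    intro x hx
    induction x with
    | nil =>
      rw [sum_split]
      have h1 : ∀ y : A, ∑ g : Fin T → A, pe n d lam [] (y :: List.ofFn g) = d [] y := by
        intro y
        simp only [pe, hlam0, one_mul, ← Finset.mul_sum]
        rw [ih (suff n [y]) (suff_length_le n [y]), mul_one]
      simp only [h1]
      exact hd [] (by simp)
    | cons a x ihx =>
      have hx' : x.length ≤ n := by simp at hx; omega
      rw [sum_split]
      have h1 : ∀ y : A, ∑ g : Fin T → A, pe n d lam (a :: x) (y :: List.ofFn g)
          = lam (a :: x) * d (a :: x) y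
            + (1 - lam (a :: x)) * ∑ g : Fin T → A, pe n d lam x (y :: List.ofFn g) := by
        intro y
        simp only [pe, Finset.sum_add_distrib, ← Finset.mul_sum]
        rw [ih (suff n ((a :: x) ++ [y])) (suff_length_le _ _), mul_one]
      simp only [h1, Finset.sum_add_distrib, ← Finset.mul_sum]
      rw [← sum_split T (fun w => pe n d lam x w), ihx hx', mul_one,
        hd (a :: x) hx]
      ring

/-- A valid hierarchical non-emitting Markov model is a probability model:
from any state of length at most `n`, the probabilities of all strings of any
fixed length `T` (encoded as functions `Fin T → A`) sum to `1`; in particular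
this holds from the empty starting state. -/
theorem nonemitting_is_probability_model {A : Type*} [Fintype A] (n : ℕ)
    (d : List A → A → ℝ) (lam : List A → ℝ)
    (hd : ∀ c : List A, c.length ≤ n →
      (∀ y : A, 0 ≤ d c y) ∧ (∑ y : A, d c y = 1))
    (hlam : ∀ c : List A, c.length ≤ n → 0 ≤ lam c ∧ lam c ≤ 1)
    (hlam0 : lam [] = 1) :
    (∀ x : List A, x.length ≤ n → ∀ T : ℕ,
      ∑ f : Fin T → A, pe n d lam x (List.ofFn f) = 1) ∧
    (∀ T : ℕ, ∑ f : Fin T → A, pe n d lam [] (List.ofFn f) = 1) := by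
  have h := sum_pe n d lam (fun c hc => (hd c hc).2) hlam0
  exact ⟨fun x hx T => h T x hx, fun T => h T [] (by simp)⟩
end

section
/- A backoff model satisfying the validity conditions is a strictly positive probability model: under hypotheses (i)–(iii) below, for every context x ∈ A*, the rescalars η are well defined along the backoff recursion (all denominators are nonzero), p_b(y|x) > 0 for every y ∈ A, and ∑_{y∈A} p_b(y|x) = 1. Hypotheses: (i) (ε, y) ∈ E for all y ∈ A, δ(y|ε) > 0 for all y, and ∑_{y∈A} δ(y|ε) = 1; (ii) for every nonempty context x with E(x) ≠ ∅: δ(y|x) > 0 for all y ∈ E(x); (iii) for every nonempty context x: if E(x) = A then ∑_{y∈A} δ(y|x) = 1, and if E(x) ≠ A then ∑_{y∈E(x)} δ(y|x) < 1. -/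
open Finset

/-- The set `E(x)` of symbols available in context `x` in the dictionary `E`. -/
def Ectx {A : Type*} [DecidableEq A] (E : Finset (List A × A)) (x : List A) :
    Finset A :=
  (E.filter (fun p => p.1 = x)).image Prod.snd

/-- Backoff model conditional probability `p_b(y|x)`: if `(x,y) ∈ E` it is
`δ(y|x)`; otherwise it backs off to the suffix `x.tail`, rescaled by
`η(x) = (1 − ∑_{z∈E(x)} δ(z|x)) / (1 − ∑_{z∈E(x)} p_b(z|x.tail))`. -/
noncomputable def pb {A : Type*} [Fintype A] [DecidableEq A]
    (E : Finset (List A × A)) (d : List A → A → ℝ) : List A → A → ℝ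
  | [], y => if ([], y) ∈ E then d [] y else 0
  | a :: x, y =>
      if (a :: x, y) ∈ E then d (a :: x) y
      else
        ((1 - ∑ z ∈ Ectx E (a :: x), d (a :: x) z) /
            (1 - ∑ z ∈ Ectx E (a :: x), pb E d x z)) * pb E d x y

/-- Backoff model string probability: probability of emitting `w` after history `h`. -/
noncomputable def pbStr {A : Type*} [Fintype A] [DecidableEq A]
    (E : Finset (List A × A)) (d : List A → A → ℝ) : List A → List A → ℝ
  | _, [] => 1
  | h, y :: w => pb E d h y * pbStr E d (h ++ [y]) w
/-- Validity conditions for a backoff model `(E, d)`: every 0th order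
transition is in `E` with a strictly positive distribution; dictionary
transitions have strictly positive probability; and in every nonempty context
the dictionary probabilities sum to `1` if all symbols are available and to
strictly less than `1` otherwise. -/
def ValidBackoff {A : Type*} [Fintype A] [DecidableEq A]
    (E : Finset (List A × A)) (d : List A → A → ℝ) : Prop :=
  (∀ y : A, ([], y) ∈ E) ∧ (∀ y : A, 0 < d [] y) ∧ (∑ y : A, d [] y = 1) ∧
  (∀ (x : List A) (y : A), x ≠ [] → (x, y) ∈ E → 0 < d x y) ∧
  (∀ x : List A, x ≠ [] →
    (Ectx E x = Finset.univ → ∑ y ∈ Ectx E x, d x y = 1) ∧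
    (Ectx E x ≠ Finset.univ → ∑ y ∈ Ectx E x, d x y < 1))

/-- A valid backoff model is a strictly positive probability model: in every
context the rescalars encountered during backoff are well defined (the
denominator `1 − ∑_{z∈E(x)} p_b(z|x.tail)` is nonzero since this sum is `< 1`
whenever backoff actually occurs, i.e. `E(x) ≠ A`), every symbol receives
strictly positive probability, and the probabilities sum to `1`. -/
theorem backoff_is_positive_probability_model {A : Type*} [Fintype A]
    [DecidableEq A] (E : Finset (List A × A)) (d : List A → A → ℝ)
    (h : ValidBackoff E d) :
    ∀ x : List A,
      (x ≠ [] → Ectx E x ≠ Finset.univ →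
        ∑ z ∈ Ectx E x, pb E d x.tail z < 1) ∧
      (∀ y : A, 0 < pb E d x y) ∧
      (∑ y : A, pb E d x y = 1) := by
  obtain ⟨h1, h2, h3, h4, h5⟩ := h
  intro x
  induction x with
  | nil =>
    refine ⟨fun hne => absurd rfl hne, ?_, ?_⟩
    · intro y; simpa [pb, h1 y] using h2 y
    · calc ∑ y : A, pb E d [] y = ∑ y : A, d [] y :=
            Finset.sum_congr rfl fun y _ => by simp [pb, h1 y]
        _ = 1 := h3
  | cons a x ih =>
    obtain ⟨-, ihpos, ihsum⟩ := ih
    have hmem : ∀ y : A, y ∈ Ectx E (a :: x) ↔ (a :: x, y) ∈ E := by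
      intro y
      simp only [Ectx, Finset.mem_image, Finset.mem_filter]
      constructor
      · rintro ⟨⟨x', y'⟩, ⟨hE, hx⟩, hy⟩
        cases hx; cases hy; exact hE
      · intro hE; exact ⟨(a :: x, y), ⟨hE, rfl⟩, rfl⟩
    have htlt : Ectx E (a :: x) ≠ Finset.univ →
        ∑ z ∈ Ectx E (a :: x), pb E d x z < 1 := by
      intro hne
      obtain ⟨i, hi⟩ : ∃ i, i ∉ Ectx E (a :: x) := by
        by_contra hc
        push_neg at hc
        exact hne (Finset.eq_univ_iff_forall.2 hc)
      calc ∑ z ∈ Ectx E (a :: x), pb E d x z < ∑ z : A, pb E d x z := by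
            apply Finset.sum_lt_sum_of_subset (Finset.subset_univ _)
              (Finset.mem_univ i) hi (ihpos i)
            intro j _ _
            exact (ihpos j).le
        _ = 1 := ihsum
    have hpos : ∀ y : A, 0 < pb E d (a :: x) y := by
      intro y
      by_cases hy : (a :: x, y) ∈ E
      · simpa [pb, hy] using h4 _ _ (by simp) hy
      · have hne : Ectx E (a :: x) ≠ Finset.univ := by
          intro hu
          exact hy ((hmem y).1 (hu ▸ Finset.mem_univ y))
        have hnum : 0 < 1 - ∑ z ∈ Ectx E (a :: x), d (a :: x) z := by
          linarith [(h5 (a :: x) (by simp)).2 hne]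
        have hden : 0 < 1 - ∑ z ∈ Ectx E (a :: x), pb E d x z := by
          linarith [htlt hne]
        simp only [pb, hy, if_false]
        exact mul_pos (div_pos hnum hden) (ihpos y)
    refine ⟨fun _ hne => by simpa using htlt hne, hpos, ?_⟩
    by_cases hu : Ectx E (a :: x) = Finset.univ
    · calc ∑ y : A, pb E d (a :: x) y = ∑ y ∈ Ectx E (a :: x), d (a :: x) y := by
            rw [hu]
            refine Finset.sum_congr rfl fun y _ => ?_
            have hy : (a :: x, y) ∈ E := (hmem y).1 (hu ▸ Finset.mem_univ y)
            simp [pb, hy]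
        _ = 1 := (h5 (a :: x) (by simp)).1 hu
    · set S := Ectx E (a :: x) with hS
      set DS := ∑ z ∈ S, d (a :: x) z with hDS
      set T := ∑ z ∈ S, pb E d x z with hT
      have hT1 : T < 1 := htlt hu
      have hsum1 : ∑ y ∈ S, pb E d (a :: x) y = DS :=
        Finset.sum_congr rfl fun y hy => by
          simp [pb, (hmem y).1 hy]
      have hsum2 : ∑ y ∈ Sᶜ, pb E d (a :: x) y = (1 - DS) / (1 - T) * (1 - T) := by
        have : ∑ y ∈ Sᶜ, pb E d (a :: x) y
            = ∑ y ∈ Sᶜ, (1 - DS) / (1 - T) * pb E d x y := by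
          refine Finset.sum_congr rfl fun y hy => ?_
          have hyE : (a :: x, y) ∈ E → False := fun hE =>
            (Finset.mem_compl.1 hy) ((hmem y).2 hE)
          simp only [pb]
          rw [if_neg hyE]
        rw [this, ← Finset.mul_sum]
        congr 1
        have := Finset.sum_add_sum_compl S (pb E d x)
        rw [ihsum] at this
        linarith
      calc ∑ y : A, pb E d (a :: x) y
          = ∑ y ∈ S, pb E d (a :: x) y + ∑ y ∈ Sᶜ, pb E d (a :: x) y :=
            (Finset.sum_add_sum_compl S _).symm
        _ = DS + (1 - DS) / (1 - T) * (1 - T) := by rw [hsum1, hsum2]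
        _ = 1 := by
            rw [div_mul_cancel₀ _ (by linarith : (1 : ℝ) - T ≠ 0)]
            ring
end
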